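/- Let n be a positive even integer, let ϑ, θ : 𝔽₂ⁿ → 𝔽₂ be bent functions, and let a ∈ 𝔽₂ⁿ be such that D_aϑ = D_aθ, where D_ah(x) = h(x) ⊕ h(x ⊕ a). Set f₁(x) = ϑ(x), f₂(x) = ϑ(x ⊕ a), f₃(x) = θ(x). Then ν₁ = f₁ ⊕ f₂ ⊕ f₃ satisfies ν₁(x) = θ(x ⊕ a) for all x, ν₁ is bent, and the dual of ν₁ equals f̃₁ ⊕ f̃₂ ⊕ f̃₃, i.e., ν̃₁(x) = θ̃(x) ⊕ a·x = (f̃₁ ⊕ f̃₂ ⊕ f̃₃)(x) for all x ∈ 𝔽₂ⁿ. -/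
import Mathlib


open Finset

/-- The sign `(-1)^b` for `b ∈ 𝔽₂`. -/
def chi (b : ZMod 2) : ℤ := if b = 0 then 1 else -1

/-- The Walsh transform of a Boolean function in `n` variables. -/
def walsh {n : ℕ} (f : (Fin n → ZMod 2) → ZMod 2) (ω : Fin n → ZMod 2) : ℤ :=
  ∑ x : Fin n → ZMod 2, chi (f x + ∑ i, ω i * x i)

/-- The Walsh transform of a Boolean function given on a product `𝔽₂ⁿ × 𝔽₂^m`. -/
def walsh2 {n m : ℕ} (f : (Fin n → ZMod 2) → (Fin m → ZMod 2) → ZMod 2)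
    (α : Fin n → ZMod 2) (β : Fin m → ZMod 2) : ℤ :=
  ∑ x : Fin n → ZMod 2, ∑ y : Fin m → ZMod 2,
    chi (f x y + (∑ i, α i * x i) + (∑ j, β j * y j))

/-- A Boolean function in `n` variables is bent if its Walsh transform only
takes the values `±2^(n/2)`. -/
def IsBent (n : ℕ) (f : (Fin n → ZMod 2) → ZMod 2) : Prop :=
  ∀ a, walsh f a = 2 ^ (n / 2) ∨ walsh f a = -(2 ^ (n / 2))

/-- Bentness for a function given on a product, i.e. as a function in `n + m` variables. -/
def IsBent2 (n m : ℕ) (f : (Fin n → ZMod 2) → (Fin m → ZMod 2) → ZMod 2) : Prop :=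
  ∀ α β, walsh2 f α β = 2 ^ ((n + m) / 2) ∨ walsh2 f α β = -(2 ^ ((n + m) / 2))

/-- `fd` is the dual of a bent function `f`:  `W_f(ω) = 2^(n/2) (−1)^{fd(ω)}`. -/
def IsDual {n : ℕ} (f fd : (Fin n → ZMod 2) → ZMod 2) : Prop :=
  ∀ ω, walsh f ω = 2 ^ (n / 2) * chi (fd ω)

/-- The dual for a bent function given on a product (a function of `n + m` variables). -/
def IsDual2 {n m : ℕ} (f fd : (Fin n → ZMod 2) → (Fin m → ZMod 2) → ZMod 2) : Prop :=
  ∀ α β, walsh2 f α β = 2 ^ ((n + m) / 2) * chi (fd α β)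

/-- Insert the bit `b` at position `μ`, giving a vector of length `n` from one of length `n-1`. -/
def insertAt {n : ℕ} (μ : Fin n) (b : ZMod 2) (x : Fin (n - 1) → ZMod 2) : Fin n → ZMod 2 :=
  fun i =>
    if h : (i : ℕ) < (μ : ℕ) then x ⟨i, by have := μ.isLt; omega⟩
    else if h' : (μ : ℕ) < (i : ℕ) then x ⟨(i : ℕ) - 1, by have := i.isLt; omega⟩
    else b

/-- Hamming weight of a vector in `𝔽₂ⁿ`. -/
def wt {n : ℕ} (ω : Fin n → ZMod 2) : ℕ := (Finset.univ.filter fun i => ω i ≠ 0).card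

/-- `t`-resiliency (with `t : ℤ`, so that the convention that every function is
`(-1)`-resilient holds). -/
def Resilient {n : ℕ} (t : ℤ) (f : (Fin n → ZMod 2) → ZMod 2) : Prop :=
  ∀ ω, (wt ω : ℤ) ≤ t → walsh f ω = 0

/-- `t`-resiliency for a function given on a product `𝔽₂ⁿ × 𝔽₂^m`. -/
def Resilient2 {n m : ℕ} (t : ℤ) (f : (Fin n → ZMod 2) → (Fin m → ZMod 2) → ZMod 2) : Prop :=
  ∀ α β, (wt α + wt β : ℤ) ≤ t → walsh2 f α β = 0


lemma chi_add' : ∀ b c : ZMod 2, chi (b + c) = chi b * chi c := by decide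

lemma chi_inj' : ∀ b c : ZMod 2, chi b = chi c → b = c := by decide

lemma chi_cases' : ∀ b : ZMod 2, chi b = 1 ∨ chi b = -1 := by decide

lemma walsh_shift {n : ℕ} (g : (Fin n → ZMod 2) → ZMod 2) (a ω : Fin n → ZMod 2) :
    walsh (fun x => g (x + a)) ω = chi (∑ i, a i * ω i) * walsh g ω := by
  unfold walsh
  rw [Finset.mul_sum]
  apply Fintype.sum_bijective (fun x => x + a) (Equiv.addRight a).bijective
  intro x
  have hdot : ∑ i, ω i * (x i + a i) = (∑ i, ω i * x i) + ∑ i, ω i * a i := by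
    simp [mul_add, Finset.sum_add_distrib]
  have hcomm : ∑ i, a i * ω i = ∑ i, ω i * a i := by
    congr 1; funext i; ring
  show chi (g (x + a) + ∑ i, ω i * x i)
      = chi (∑ i, a i * ω i) * chi (g (x + a) + ∑ i, ω i * (x + a) i)
  rw [← chi_add']
  congr 1
  show g (x + a) + ∑ i, ω i * x i
      = ∑ i, a i * ω i + (g (x + a) + ∑ i, ω i * (x i + a i))
  rw [hdot, hcomm]
  have h2 : ∀ u : ZMod 2, u + u = 0 := by decide
  calc g (x + a) + ∑ i, ω i * x i
      = 0 + (g (x + a) + ∑ i, ω i * x i) := by ring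
    _ = (∑ i, ω i * a i + ∑ i, ω i * a i) + (g (x + a) + ∑ i, ω i * x i) := by
        rw [h2]
    _ = ∑ i, ω i * a i + (g (x + a) + ((∑ i, ω i * x i) + ∑ i, ω i * a i)) := by
        ring

lemma dual_unique {n : ℕ} {f d : (Fin n → ZMod 2) → ZMod 2} (h : IsDual f d)
    {e : (Fin n → ZMod 2) → ZMod 2}
    (h2 : ∀ ω, walsh f ω = 2 ^ (n / 2) * chi (e ω)) : ∀ ω, d ω = e ω := by
  intro ω
  have hh := (h ω).symm.trans (h2 ω)
  have h2n : (2 : ℤ) ^ (n / 2) ≠ 0 := by positivity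
  exact chi_inj' _ _ (mul_left_cancel₀ h2n hh)

/-- if `ϑ, θ` are bent with `D_aϑ = D_aθ`, then `f₁ = ϑ`,
`f₂ = ϑ(· ⊕ a)`, `f₃ = θ` satisfy: `ν₁ = f₁ ⊕ f₂ ⊕ f₃` equals `θ(· ⊕ a)`, is bent,
and its dual is `θ̃ ⊕ a·x`, which equals the sum of the duals of `f₁, f₂, f₃`. -/
theorem dual_sum_example_from_derivative (n : ℕ) (hn0 : 0 < n) (hn : Even n)
    (ϑ θ : (Fin n → ZMod 2) → ZMod 2) (hϑ : IsBent n ϑ) (hθ : IsBent n θ)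
    (a : Fin n → ZMod 2)
    (hD : ∀ x, ϑ x + ϑ (x + a) = θ x + θ (x + a))
    (f1 f2 f3 ν1 : (Fin n → ZMod 2) → ZMod 2)
    (hf1 : ∀ x, f1 x = ϑ x) (hf2 : ∀ x, f2 x = ϑ (x + a)) (hf3 : ∀ x, f3 x = θ x)
    (hν1 : ∀ x, ν1 x = f1 x + f2 x + f3 x)
    (dθ : (Fin n → ZMod 2) → ZMod 2) (hdθ : IsDual θ dθ) :
    (∀ x, ν1 x = θ (x + a)) ∧
    IsBent n ν1 ∧
    (∀ d1 d2 d3 dν : (Fin n → ZMod 2) → ZMod 2,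
      IsDual f1 d1 → IsDual f2 d2 → IsDual f3 d3 → IsDual ν1 dν →
      ∀ x, dν x = dθ x + (∑ i, a i * x i) ∧ dν x = d1 x + d2 x + d3 x) := by
  have key : ∀ u v : ZMod 2, u + v + u = v := by decide
  have part1 : ∀ x, ν1 x = θ (x + a) := by
    intro x
    rw [hν1, hf1, hf2, hf3, hD, key]
  have hwν : ∀ ω, walsh ν1 ω = 2 ^ (n / 2) * chi (dθ ω + ∑ i, a i * ω i) := by
    intro ω
    have hν : ν1 = fun x => θ (x + a) := funext part1
    rw [hν, walsh_shift, hdθ ω, chi_add']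
    ring
  refine ⟨part1, ?_, ?_⟩
  · intro ω
    rw [hwν ω]
    rcases chi_cases' (dθ ω + ∑ i, a i * ω i) with h | h <;> rw [h] <;> simp
  · intro d1 d2 d3 dν hd1 hd2 hd3 hdν x
    have hdνx : dν x = dθ x + ∑ i, a i * x i := dual_unique hdν hwν x
    have hϑd1 : IsDual ϑ d1 := by
      intro ω
      rw [show ϑ = f1 from funext fun y => (hf1 y).symm]; exact hd1 ω
    have hd2' : ∀ ω, d2 ω = d1 ω + ∑ i, a i * ω i := by
      apply dual_unique hd2
      intro ω
      have hf2' : f2 = fun x => ϑ (x + a) := funext hf2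
      rw [hf2', walsh_shift, hϑd1 ω, chi_add']
      ring
    have hd3' : ∀ ω, d3 ω = dθ ω := by
      apply dual_unique hd3
      intro ω
      rw [show f3 = θ from funext hf3]; exact hdθ ω
    refine ⟨hdνx, ?_⟩
    rw [hdνx, hd2' x, hd3' x]
    have : ∀ u v w : ZMod 2, u + (u + v) + w = w + v := by decide
    rw [this]
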